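/- On the region R := {(a,b,c) ∈ (0,1)³ : a ≥ 1/2, b ≥ 1/2, c ≥ a, c ≥ b}, the function g(a,b,c) := a·b·(1−c) + (1−a)·(1−b)·c is nonincreasing in each of its three arguments separately (when the other two are held fixed and both points lie in R). Consequently, for n = 3, the spectral gap λ_K = (1/2)·(1 − g(p_{12}, p_{23}, p_{13})^{1/2}) is nondecreasing in each of p_{12}, p_{23}, p_{13} as p ranges over regular parameter vectors. -/

import Mathlib

/-- The function `g(a,b,c) = a·b·(1-c) + (1-a)·(1-b)·c` (for `n = 3`,
`λ_K = (1/2)(1 - √(g(p₁₂, p₂₃, p₁₃)))`). -/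
def g3 (a b c : ℝ) : ℝ := a * b * (1 - c) + (1 - a) * (1 - b) * c

/-- The region `R`: `(a,b,c) ∈ (0,1)³` with `a ≥ 1/2`, `b ≥ 1/2`, `c ≥ a`, `c ≥ b`
(regularity for `n = 3` with `a = p₁₂`, `b = p₂₃`, `c = p₁₃`). -/
def reg3 (a b c : ℝ) : Prop :=
  a ∈ Set.Ioo (0 : ℝ) 1 ∧ b ∈ Set.Ioo (0 : ℝ) 1 ∧ c ∈ Set.Ioo (0 : ℝ) 1 ∧
    1 / 2 ≤ a ∧ 1 / 2 ≤ b ∧ a ≤ c ∧ b ≤ c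

section g3

variable {a a' b b' c c' : ℝ}

lemma g3_sub_g3_left (a a' b c : ℝ) : g3 a' b c - g3 a b c = (a' - a) * (b - c) := by
  unfold g3; ring

lemma g3_sub_g3_middle (a b b' c : ℝ) : g3 a b' c - g3 a b c = (b' - b) * (a - c) := by
  unfold g3; ring

lemma g3_sub_g3_right (a b c c' : ℝ) : g3 a b c' - g3 a b c = (c' - c) * (1 - a - b) := by
  unfold g3; ring

lemma g3_le_g3_of_le_left (hbc : b ≤ c) (ha : a ≤ a') : g3 a' b c ≤ g3 a b c := by
  have := g3_sub_g3_left a a' b c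
  linarith [mul_nonpos_of_nonneg_of_nonpos (sub_nonneg.2 ha) (sub_nonpos.2 hbc)]

lemma g3_le_g3_of_le_middle (hac : a ≤ c) (hb : b ≤ b') : g3 a b' c ≤ g3 a b c := by
  have := g3_sub_g3_middle a b b' c
  linarith [mul_nonpos_of_nonneg_of_nonpos (sub_nonneg.2 hb) (sub_nonpos.2 hac)]

lemma g3_le_g3_of_le_right (hab : 1 ≤ a + b) (hc : c ≤ c') : g3 a b c' ≤ g3 a b c := by
  have := g3_sub_g3_right a b c c'
  linarith [mul_nonpos_of_nonneg_of_nonpos (sub_nonneg.2 hc) (by linarith : 1 - a - b ≤ 0)]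

end g3

lemma half_mul_one_sub_sqrt_le_of_le {x y : ℝ} (h : x ≤ y) :
    1 / 2 * (1 - Real.sqrt y) ≤ 1 / 2 * (1 - Real.sqrt x) := by
  gcongr

/-- on the region `R`, the function `g` is nonincreasing in each of its
three arguments separately; consequently, for `n = 3`, the spectral gap
`λ_K = (1/2)(1 - √(g(p₁₂, p₂₃, p₁₃)))` is nondecreasing in each of `p₁₂`, `p₂₃`, `p₁₃`
as `p` ranges over regular parameter vectors. -/
theorem g3_antitone_gap_monotone :
    (∀ a a' b c : ℝ, reg3 a b c → reg3 a' b c → a ≤ a' → g3 a' b c ≤ g3 a b c) ∧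
    (∀ a b b' c : ℝ, reg3 a b c → reg3 a b' c → b ≤ b' → g3 a b' c ≤ g3 a b c) ∧
    (∀ a b c c' : ℝ, reg3 a b c → reg3 a b c' → c ≤ c' → g3 a b c' ≤ g3 a b c) ∧
    (∀ a a' b c : ℝ, reg3 a b c → reg3 a' b c → a ≤ a' →
      (1 / 2) * (1 - Real.sqrt (g3 a b c)) ≤ (1 / 2) * (1 - Real.sqrt (g3 a' b c))) ∧
    (∀ a b b' c : ℝ, reg3 a b c → reg3 a b' c → b ≤ b' →
      (1 / 2) * (1 - Real.sqrt (g3 a b c)) ≤ (1 / 2) * (1 - Real.sqrt (g3 a b' c))) ∧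
    (∀ a b c c' : ℝ, reg3 a b c → reg3 a b c' → c ≤ c' →
      (1 / 2) * (1 - Real.sqrt (g3 a b c)) ≤ (1 / 2) * (1 - Real.sqrt (g3 a b c'))) := by
  have left : ∀ a a' b c : ℝ, reg3 a b c → reg3 a' b c → a ≤ a' → g3 a' b c ≤ g3 a b c :=
    fun _ _ _ _ ⟨_, _, _, _, _, _, hbc⟩ _ ha => g3_le_g3_of_le_left hbc ha
  have middle : ∀ a b b' c : ℝ, reg3 a b c → reg3 a b' c → b ≤ b' → g3 a b' c ≤ g3 a b c :=
    fun _ _ _ _ ⟨_, _, _, _, _, hac, _⟩ _ hb => g3_le_g3_of_le_middle hac hb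
  have right : ∀ a b c c' : ℝ, reg3 a b c → reg3 a b c' → c ≤ c' → g3 a b c' ≤ g3 a b c :=
    fun _ _ _ _ ⟨_, _, _, ha, hb, _, _⟩ _ hc => g3_le_g3_of_le_right (by linarith) hc
  exact ⟨left, middle, right,
    fun a a' b c h h' ha => half_mul_one_sub_sqrt_le_of_le (left a a' b c h h' ha),
    fun a b b' c h h' hb => half_mul_one_sub_sqrt_le_of_le (middle a b b' c h h' hb),
    fun a b c c' h h' hc => half_mul_one_sub_sqrt_le_of_le (right a b c c' h h' hc)⟩
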